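/- arXiv:0803.2257 — 4 statements merged into one kernel-verified Lean document; each statement's English description precedes it below -/
import Mathlib

section
/- Welch bound: if Φ = (φ_0, …, φ_{M−1}) is a family of M unit-norm vectors in ℂ^N with N ≤ M, then the coherence μ(Φ) = max_{i ≠ i'} |⟨φ_i, φ_{i'}⟩| satisfies μ(Φ) ≥ √((M−N)/(N(M−1))). -/
/-!
Write the `φ i` in an orthonormal basis as the columns of an `N × M` matrix `A`. The Gram matrix
`AᴴA` and the frame operator `AAᴴ` have the same trace `∑ ‖φ i‖² = M` and the same Frobenius
norm, so Cauchy–Schwarz on the `N` diagonal entries of `AAᴴ` gives the frame potential bound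
`∑_{i,i'} |⟨φ i, φ i'⟩|² ≥ M² / N`. If all off-diagonal inner products were smaller than
`μ = √((M - N)/(N(M - 1)))`, the frame potential would be below `M + M(M - 1)μ² = M² / N`.
-/

open Finset Matrix
open scoped InnerProductSpace

section Trace

variable {m n 𝕜 : Type*} [Fintype m] [Fintype n] [RCLike 𝕜]

lemma trace_conjTranspose_mul_self_eq_sum_norm_sq (B : Matrix m n 𝕜) :
    (Bᴴ * B).trace = ((∑ i, ∑ j, ‖B i j‖ ^ 2 : ℝ) : 𝕜) := by
  rw [trace, Finset.sum_comm]
  simp only [diag_apply, mul_apply, conjTranspose_apply, RCLike.star_def, RCLike.conj_mul]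
  push_cast
  rfl

lemma sum_norm_sq_conjTranspose_mul_self_eq (A : Matrix m n 𝕜) :
    ∑ i, ∑ j, ‖(Aᴴ * A) i j‖ ^ 2 = ∑ i, ∑ j, ‖(A * Aᴴ) i j‖ ^ 2 := by
  apply RCLike.ofReal_injective (K := 𝕜)
  rw [← trace_conjTranspose_mul_self_eq_sum_norm_sq, ← trace_conjTranspose_mul_self_eq_sum_norm_sq]
  simp only [conjTranspose_mul, conjTranspose_conjTranspose, Matrix.mul_assoc]
  rw [trace_mul_comm]
  simp only [Matrix.mul_assoc]

lemma sq_norm_trace_le_card_mul_sum_norm_sq (F : Matrix n n 𝕜) :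
    ‖F.trace‖ ^ 2 ≤ Fintype.card n * ∑ i, ∑ j, ‖F i j‖ ^ 2 := by
  calc ‖F.trace‖ ^ 2 ≤ (∑ i, ‖F i i‖) ^ 2 := by gcongr; exact norm_sum_le _ _
    _ ≤ Fintype.card n * ∑ i, ‖F i i‖ ^ 2 := sq_sum_le_card_mul_sum_sq
    _ ≤ Fintype.card n * ∑ i, ∑ j, ‖F i j‖ ^ 2 := by
      gcongr with i
      exact single_le_sum (f := fun j ↦ ‖F i j‖ ^ 2) (fun _ _ ↦ sq_nonneg _) (mem_univ i)

lemma sq_norm_trace_conjTranspose_mul_self_le (A : Matrix m n 𝕜) :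
    ‖(Aᴴ * A).trace‖ ^ 2 ≤ Fintype.card m * ∑ i, ∑ j, ‖(Aᴴ * A) i j‖ ^ 2 := by
  rw [trace_mul_comm, sum_norm_sq_conjTranspose_mul_self_eq]
  exact sq_norm_trace_le_card_mul_sum_norm_sq _

end Trace

theorem sq_sum_norm_sq_le_finrank_mul_sum_norm_inner_sq {ι 𝕜 E : Type*} [Fintype ι] [RCLike 𝕜]
    [NormedAddCommGroup E] [InnerProductSpace 𝕜 E] [FiniteDimensional 𝕜 E] (v : ι → E) :
    (∑ i, ‖v i‖ ^ 2) ^ 2 ≤ Module.finrank 𝕜 E * ∑ i, ∑ j, ‖⟪v i, v j⟫_𝕜‖ ^ 2 := by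
  have htrace : (gram 𝕜 v).trace = ((∑ i, ‖v i‖ ^ 2 : ℝ) : 𝕜) := by
    simp [trace, inner_self_eq_norm_sq_to_K]
  have key := sq_norm_trace_conjTranspose_mul_self_le
    (of fun j i ↦ (stdOrthonormalBasis 𝕜 E).repr (v i) j)
  rw [← gram_eq_conjTranspose_mul, htrace, RCLike.norm_ofReal, sq_abs, Fintype.card_fin] at key
  simpa using key

lemma sum_sum_lt_sum_diag_add_of_offDiag_lt {ι : Type*} [Fintype ι] [DecidableEq ι]
    (hι : 1 < Fintype.card ι) {g : ι → ι → ℝ} {c : ℝ} (hg : ∀ i j, i ≠ j → g i j < c) :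
    ∑ i, ∑ j, g i j < ∑ i, (g i i + (Fintype.card ι - 1) * c) := by
  have hrow (i : ι) : ∑ j, g i j < g i i + (Fintype.card ι - 1) * c := by
    rw [← add_sum_erase _ _ (mem_univ i)]
    have hne : (univ.erase i).Nonempty := by
      rw [← card_pos, card_erase_of_mem (mem_univ i), card_univ]; omega
    have := sum_lt_sum_of_nonempty hne fun j hj ↦ hg i j (ne_of_mem_erase hj).symm
    rw [sum_const, card_erase_of_mem (mem_univ i), card_univ, nsmul_eq_mul,
      Nat.cast_sub hι.le, Nat.cast_one] at this
    linarith
  exact sum_lt_sum_of_nonempty (univ_nonempty_iff.mpr (Fintype.card_pos_iff.mp (by omega)))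
    fun i _ ↦ hrow i

theorem welch_bound_general (N M : ℕ) (hN : 1 ≤ N) (hM : 2 ≤ M)
    (φ : Fin M → EuclideanSpace ℂ (Fin N)) (hnorm : ∀ i, ‖φ i‖ = 1) :
    ∃ i i' : Fin M, i ≠ i' ∧
      Real.sqrt (((M : ℝ) - N) / (N * ((M : ℝ) - 1))) ≤ ‖(inner ℂ (φ i) (φ i') : ℂ)‖ := by
  by_contra! hsmall
  set c := ((M : ℝ) - N) / (N * ((M : ℝ) - 1))
  have hframe := sq_sum_norm_sq_le_finrank_mul_sum_norm_inner_sq (𝕜 := ℂ) φ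
  have hoff := sum_sum_lt_sum_diag_add_of_offDiag_lt (by simp only [Fintype.card_fin]; omega)
    (g := fun i i' ↦ ‖(inner ℂ (φ i) (φ i') : ℂ)‖ ^ 2) (c := c)
    fun i i' h ↦ (Real.lt_sqrt (norm_nonneg _)).mp (hsmall i i' h)
  simp only [hnorm, inner_self_eq_norm_sq_to_K, finrank_euclideanSpace_fin, sum_const, card_univ,
    Fintype.card_fin, nsmul_eq_mul, one_pow, mul_one, RCLike.ofReal_one, norm_one] at hframe hoff
  have hN' : (0 : ℝ) < N := by exact_mod_cast hN
  have hM' : (M : ℝ) - 1 ≠ 0 := by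
    have : (2 : ℝ) ≤ M := by exact_mod_cast hM
    linarith
  have hpotential : (N : ℝ) * (M * (1 + (M - 1) * c)) = (M : ℝ) ^ 2 := by
    unfold c; field_simp; ring
  linarith [mul_lt_mul_of_pos_left hoff hN']

/-- Welch bound: `M` unit-norm vectors in `ℂ^N` with `N ≤ M` have coherence at least
`√((M − N)/(N(M − 1)))`. -/
theorem welch_bound (N M : ℕ) (hN : 1 ≤ N) (hNM : N ≤ M) (hM : 2 ≤ M)
    (φ : Fin M → EuclideanSpace ℂ (Fin N)) (hnorm : ∀ i, ‖φ i‖ = 1) :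
    ∃ i i' : Fin M, i ≠ i' ∧
      Real.sqrt (((M : ℝ) - N) / (N * ((M : ℝ) - 1))) ≤ ‖(inner ℂ (φ i) (φ i') : ℂ)‖ :=
  welch_bound_general N M hN hM φ hnorm
end

section
/- If a dictionary in ℂ^N is the union of two orthonormal bases of ℂ^N, then its coherence is at least 1/√N: there exist i, j with φ_i from the first basis and φ_j from the second such that |⟨φ_i, φ_j⟩| ≥ 1/√N. -/
/-!
Expanding a unit vector `e i` of the first basis in the second basis, Parseval gives
`∑ j, ‖⟪f j, e i⟫‖ ^ 2 = 1`, so the largest of these `N` coefficients has modulus at least `1/√N`.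
-/

namespace OrthonormalBasis

variable {ι 𝕜 E : Type*} [Fintype ι] [Nonempty ι] [RCLike 𝕜] [NormedAddCommGroup E]
  [InnerProductSpace 𝕜 E]

theorem exists_norm_div_sqrt_card_le_norm_inner (b : OrthonormalBasis ι 𝕜 E) (x : E) :
    ∃ i, ‖x‖ / √(Fintype.card ι) ≤ ‖(inner 𝕜 (b i) x : 𝕜)‖ := by
  obtain ⟨i, hi⟩ := exists_eq_ciSup_of_finite (f := fun j ↦ ‖(inner 𝕜 (b j) x : 𝕜)‖)
  refine ⟨i, (div_le_iff₀' ?_).2 ?_⟩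
  · exact Real.sqrt_pos.2 (mod_cast Fintype.card_pos)
  · simpa only [hi] using b.norm_le_card_mul_iSup_norm_inner x

end OrthonormalBasis

/-- The union of two orthonormal bases of `ℂ^N` has coherence at least `1/√N`. -/
theorem two_onb_coherence (N : ℕ) (hN : 1 ≤ N)
    (e f : OrthonormalBasis (Fin N) ℂ (EuclideanSpace ℂ (Fin N))) :
    ∃ i j : Fin N, 1 / Real.sqrt N ≤ ‖(inner ℂ (e i) (f j) : ℂ)‖ := by
  have : NeZero N := ⟨by omega⟩
  obtain ⟨j, hj⟩ := f.exists_norm_div_sqrt_card_le_norm_inner (e 0)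
  refine ⟨0, j, ?_⟩
  rwa [e.orthonormal.1 0, Fintype.card_fin, norm_inner_symm] at hj
end

section
/- For the Alltop sequence f ∈ ℂ^N with f_n = (1/√N) e^{2πi n³/N} and N ≥ 5 prime, any two atoms from different time-shift blocks satisfy |⟨M^j T^k f, M^{j'} T^{k'} f⟩| = 1/√N whenever k ≠ k' (for all j, j' ∈ ℤ/N). -/
/-!
In `ZMod N` coordinates, with `e` the standard additive character, the atom `M ^ j * T ^ k f`
is `x ↦ N^{-1/2} e(j x + (x - k)³)`. In the inner product of two atoms with `k ≠ k'` the cubic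
terms cancel, leaving a unimodular constant times `∑ₓ e(3 (k - k') x² + b x)`, whose leading
coefficient is nonzero because `N ∤ 6`. For `S = ∑ₓ e(q x)` with `q x = a x² + b x`, Weyl
differencing gives `|S|² = ∑_d e(q d) ∑_y e(2 a d y)`, and orthogonality of characters leaves
only `d = 0`, so `|S|² = N`.
-/

open Complex Matrix ComplexConjugate

theorem AddChar.sq_norm_sum_eq_sum_sum_sub {A R : Type*} [AddCommGroup A] [Fintype A]
    [AddCommGroup R] [Finite R] (ψ : AddChar R ℂ) (q : A → R) :
    ((‖∑ x, ψ (q x)‖ ^ 2 : ℝ) : ℂ) = ∑ d, ∑ y, ψ (q (y + d) - q y) := by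
  rw [← Complex.normSq_eq_norm_sq, ← Complex.mul_conj, map_sum, Finset.sum_mul_sum]
  conv_lhs => rw [Finset.sum_comm]
  conv_rhs => rw [Finset.sum_comm]
  refine Finset.sum_congr rfl fun y _ => ?_
  rw [← Equiv.sum_comp (Equiv.addLeft y)]
  simp only [Equiv.coe_addLeft, ← AddChar.map_neg_eq_conj, ← AddChar.map_add_eq_mul,
    ← sub_eq_add_neg]

theorem AddChar.norm_sum_quadratic {F : Type*} [Field F] [Fintype F] {ψ : AddChar F ℂ}
    (hψ : ψ.IsPrimitive) {a : F} (ha : 2 * a ≠ 0) (b : F) :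
    ‖∑ x, ψ (a * x ^ 2 + b * x)‖ = √(Fintype.card F) := by
  classical
  have hdiff : ∀ d y : F, a * (y + d) ^ 2 + b * (y + d) - (a * y ^ 2 + b * y)
      = a * d ^ 2 + b * d + y * (2 * a * d) := fun d y => by ring
  have hsq : ((‖∑ x, ψ (a * x ^ 2 + b * x)‖ ^ 2 : ℝ) : ℂ) = Fintype.card F := by
    rw [AddChar.sq_norm_sum_eq_sum_sum_sub ψ (fun x => a * x ^ 2 + b * x)]
    simp only [hdiff, AddChar.map_add_eq_mul _ (a * _ ^ 2 + b * _), ← Finset.mul_sum,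
      AddChar.sum_mulShift _ hψ, mul_eq_zero, ha, false_or]
    simp
  rw [← Real.sqrt_sq (norm_nonneg _)]
  exact congrArg Real.sqrt (by exact_mod_cast hsq)

theorem AddChar.norm_sum_conj_mul_shifted_cube {F : Type*} [Field F] [Fintype F]
    {ψ : AddChar F ℂ} (hψ : ψ.IsPrimitive) (h6 : (6 : F) ≠ 0) {κ κ' : F} (hκ : κ ≠ κ')
    (ι ι' : F) :
    ‖∑ x, conj (ψ (ι * x + (x - κ) ^ 3)) * ψ (ι' * x + (x - κ') ^ 3)‖
      = √(Fintype.card F) := by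
  have h2a : 2 * (3 * (κ - κ')) ≠ 0 := by
    rw [← mul_assoc]
    exact mul_ne_zero (by norm_num [h6]) (sub_ne_zero.mpr hκ)
  have hsummand : ∀ x, conj (ψ (ι * x + (x - κ) ^ 3)) * ψ (ι' * x + (x - κ') ^ 3)
      = ψ (κ ^ 3 - κ' ^ 3) *
          ψ (3 * (κ - κ') * x ^ 2 + (ι' - ι + 3 * (κ' ^ 2 - κ ^ 2)) * x) := by
    intro x
    rw [← AddChar.map_neg_eq_conj, ← AddChar.map_add_eq_mul, ← AddChar.map_add_eq_mul]
    ring_nf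
  simp only [hsummand, ← Finset.mul_sum, norm_mul, AddChar.norm_apply, one_mul,
    AddChar.norm_sum_quadratic hψ h2a]

theorem Matrix.shift_pow_mulVec {G R : Type*} [AddCommGroup G] [Fintype G] [DecidableEq G]
    [Semiring R] {g : G} {T : Matrix G G R} (hT : ∀ i j, T i j = if i = j + g then 1 else 0)
    (m : ℕ) (v : G → R) : T ^ m *ᵥ v = fun i => v (i - m • g) := by
  induction m generalizing v with
  | zero => ext; simp
  | succ m ih =>
    rw [pow_succ, ← mulVec_mulVec, ih]
    ext i
    simp only [mulVec, dotProduct, hT, ite_mul, one_mul, zero_mul, ← sub_eq_iff_eq_add,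
      Finset.sum_ite_eq, Finset.mem_univ, if_true]
    rw [succ_nsmul, sub_sub]

theorem Matrix.diagonal_pow_mul_shift_pow_mulVec_apply {G R : Type*} [AddCommGroup G]
    [Fintype G] [DecidableEq G] [CommSemiring R] {g : G} {T : Matrix G G R}
    (hT : ∀ i j, T i j = if i = j + g then 1 else 0) (d : G → R) (a b : ℕ) (v : G → R)
    (i : G) : ((diagonal d ^ a * T ^ b) *ᵥ v) i = d i ^ a * v (i - b • g) := by
  rw [← mulVec_mulVec, diagonal_pow, mulVec_diagonal, shift_pow_mulVec hT, Pi.pow_apply]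

namespace ZMod

lemma six_ne_zero {N : ℕ} (hp : N.Prime) (hN : 5 ≤ N) : (6 : ZMod N) ≠ 0 := by
  intro h
  have hdvd : N ∣ 2 * 3 := (natCast_eq_zero_iff _ N).mp (by exact_mod_cast h)
  rcases hp.dvd_mul.mp hdvd with h2 | h3
  · exact absurd (Nat.le_of_dvd (by norm_num) h2) (by omega)
  · exact absurd (Nat.le_of_dvd (by norm_num) h3) (by omega)

variable {N : ℕ} [NeZero N]

open Fin.CommRing in
lemma finEquiv_apply (x : Fin N) : finEquiv N x = x.val := by
  conv_lhs => rw [← Fin.cast_val_eq_self x]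
  exact map_natCast (finEquiv N) x.val

lemma stdAddChar_natCast (m : ℕ) :
    stdAddChar (m : ZMod N) = exp (2 * Real.pi * I * m / N) := by
  simpa using stdAddChar_coe (N := N) m

theorem timeFrequencyShift_apply {T : Matrix (Fin N) (Fin N) ℂ}
    (hT : ∀ i j, T i j = if i = j + 1 then 1 else 0) (u : ZMod N → ℂ) (j k n : Fin N) :
    (((diagonal fun m => stdAddChar (finEquiv N m)) ^ (j : ℕ) * T ^ (k : ℕ)) *ᵥ
        (u ∘ finEquiv N)) n
      = stdAddChar (finEquiv N j * finEquiv N n) * u (finEquiv N n - finEquiv N k) := by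
  rw [diagonal_pow_mul_shift_pow_mulVec_apply hT, Function.comp_apply, map_sub, map_nsmul,
    map_one, nsmul_one, ← AddChar.map_nsmul_eq_pow, nsmul_eq_mul, ← finEquiv_apply,
    ← finEquiv_apply]

end ZMod

/-- For the Alltop sequence with `N ≥ 5` prime, atoms from different time-shift blocks
have inner product of modulus `1/√N`. -/
theorem alltop_cross_block_coherence (N : ℕ) [NeZero N] (hp : N.Prime) (hN : 5 ≤ N)
    (T : Matrix (Fin N) (Fin N) ℂ)
    (hT : T = fun i j => if i = j + 1 then 1 else 0)
    (M : Matrix (Fin N) (Fin N) ℂ)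
    (hM : M = Matrix.diagonal fun m : Fin N =>
      Complex.exp (2 * Real.pi * Complex.I * (m : ℕ) / N))
    (f : EuclideanSpace ℂ (Fin N))
    (hf : f = fun n : Fin N => (1 / Real.sqrt N : ℝ) *
      Complex.exp (2 * Real.pi * Complex.I * ((n : ℕ) ^ 3) / N))
    (j j' k k' : Fin N) (hkk' : k ≠ k') :
    ‖(inner ℂ
        (show EuclideanSpace ℂ (Fin N) from WithLp.toLp 2 ((M ^ (j : ℕ) * T ^ (k : ℕ)).mulVec f))
        (show EuclideanSpace ℂ (Fin N) from WithLp.toLp 2 ((M ^ (j' : ℕ) * T ^ (k' : ℕ)).mulVec f)) : ℂ)‖ =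
      1 / Real.sqrt N := by
  have : Fact N.Prime := ⟨hp⟩
  set c : ℂ := ((1 / √N : ℝ) : ℂ)
  have hT' : ∀ i j, T i j = if i = j + 1 then 1 else 0 := fun i j => by rw [hT]
  have hM' : M = diagonal fun m => ZMod.stdAddChar (ZMod.finEquiv N m) := by
    simp only [hM, ZMod.finEquiv_apply, ZMod.stdAddChar_natCast]
  have hf' : ⇑f = (fun x => c * ZMod.stdAddChar (x ^ 3)) ∘ ZMod.finEquiv N := by
    ext m
    simp only [hf, Function.comp_apply, ZMod.finEquiv_apply, ← Nat.cast_pow,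
      ZMod.stdAddChar_natCast]
  have hsummand : ∀ a b a' b' : ZMod N,
      ZMod.stdAddChar a' * (c * ZMod.stdAddChar b') *
          conj (ZMod.stdAddChar a * (c * ZMod.stdAddChar b))
        = c * c * (conj (ZMod.stdAddChar (a + b)) * ZMod.stdAddChar (a' + b')) := by
    intro a b a' b'
    simp only [map_mul, AddChar.map_add_eq_mul, c, Complex.conj_ofReal]
    ring
  have key := AddChar.norm_sum_conj_mul_shifted_cube (ZMod.isPrimitive_stdAddChar N)
    (ZMod.six_ne_zero hp hN) ((ZMod.finEquiv N).injective.ne hkk')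
    (ZMod.finEquiv N j) (ZMod.finEquiv N j')
  rw [← (ZMod.finEquiv N).bijective.sum_comp, ZMod.card] at key
  rw [PiLp.inner_apply, hM', hf']
  simp only [ZMod.timeFrequencyShift_apply hT', RCLike.inner_apply, hsummand, ← Finset.mul_sum]
  have hsqrt : 0 < √(N : ℝ) := Real.sqrt_pos.mpr (by exact_mod_cast hp.pos)
  rw [norm_mul, key, norm_mul, Complex.norm_real, Real.norm_of_nonneg (by positivity)]
  field_simp
end

section
/- Uniqueness of sparse representation for incoherent dictionaries: if Φ ∈ ℂ^{N×M} has unit-norm columns and coherence μ, and s, s' are both K-sparse with K < (1/2)(1/μ + 1) and Φs = Φs', then s = s'. -/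
open Complex

/-!
If `s ≠ s'`, then `x = s - s'` is a nonzero vector in the kernel of `Φ`, hence of the Gram
matrix `Φᴴ Φ`, whose diagonal is `1` and whose off-diagonal entries are bounded by `μ`.
Reading the equation `(Φᴴ Φ x) j₀ = 0` at an entry `j₀` of largest modulus gives
`|x j₀| ≤ (‖x‖₀ - 1) μ |x j₀|`, so every nonzero kernel vector has at least `1 + 1/μ` nonzero
entries. But `x` has at most `2K < 1 + 1/μ` of them.
-/

open Finset Matrix

theorem card_filter_sub_ne_zero_le {ι 𝕜 : Type*} [Fintype ι] [AddGroup 𝕜] [DecidableEq 𝕜]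
    (s s' : ι → 𝕜) :
    #{j | (s - s') j ≠ 0} ≤ #{j | s j ≠ 0} + #{j | s' j ≠ 0} := by
  classical
  refine (card_le_card fun j hj => ?_).trans (card_union_le _ _)
  simp only [mem_filter, mem_union, mem_univ, true_and, Pi.sub_apply] at hj ⊢
  by_contra! h
  exact hj (by rw [h.1, h.2, sub_self])

theorem one_le_card_filter_ne_zero_sub_one_mul {ι 𝕜 : Type*} [Fintype ι] [DecidableEq ι]
    [NormedField 𝕜] [DecidableEq 𝕜] {A : Matrix ι ι 𝕜} {μ : ℝ} (hdiag : ∀ i, A i i = 1)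
    (hoff : ∀ i j, i ≠ j → ‖A i j‖ ≤ μ) {x : ι → 𝕜} (hx : x ≠ 0) (hAx : A *ᵥ x = 0) :
    1 ≤ (#{j | x j ≠ 0} - 1 : ℝ) * μ := by
  set T : Finset ι := {j | x j ≠ 0}
  obtain ⟨j, hj⟩ : ∃ j, x j ≠ 0 := Function.ne_iff.mp hx
  obtain ⟨j₀, -, hj₀max⟩ := exists_max_image univ (fun j => ‖x j‖) ⟨j, mem_univ j⟩
  have hxj₀ : 0 < ‖x j₀‖ := (norm_pos_iff.mpr hj).trans_le (hj₀max j (mem_univ j))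
  have hj₀T : j₀ ∈ T := by simpa [T] using hxj₀
  have hrow : x j₀ + ∑ j ∈ T.erase j₀, A j₀ j * x j = 0 :=
    calc _ = ∑ j ∈ T, A j₀ j * x j := by rw [← add_sum_erase _ _ hj₀T, hdiag, one_mul]
      _ = (A *ᵥ x) j₀ := sum_subset (subset_univ T) fun j _ hjT => by simp_all [T]
      _ = 0 := by rw [hAx, Pi.zero_apply]
  have hbound : ‖x j₀‖ ≤ (#T - 1 : ℝ) * μ * ‖x j₀‖ :=
    calc ‖x j₀‖ = ‖∑ j ∈ T.erase j₀, A j₀ j * x j‖ := by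
          rw [eq_neg_of_add_eq_zero_left hrow, norm_neg]
      _ ≤ ∑ j ∈ T.erase j₀, μ * ‖x j₀‖ := by
          refine (norm_sum_le _ _).trans (sum_le_sum fun j hj => ?_)
          rw [norm_mul]
          exact mul_le_mul (hoff j₀ j (ne_of_mem_erase hj).symm) (hj₀max j (mem_univ j))
            (norm_nonneg _) ((norm_nonneg _).trans (hoff j₀ j (ne_of_mem_erase hj).symm))
      _ = (#T - 1 : ℝ) * μ * ‖x j₀‖ := by
          rw [sum_const, card_erase_of_mem hj₀T, nsmul_eq_mul,
            Nat.cast_pred (card_pos.mpr ⟨j₀, hj₀T⟩), mul_assoc]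
  exact le_of_mul_le_mul_right (by simpa using hbound) hxj₀

theorem conjTranspose_mul_self_apply {m n 𝕜 : Type*} [Fintype m] [RCLike 𝕜]
    (Φ : Matrix m n 𝕜) (j j' : n) :
    (Φᴴ * Φ) j j' = ∑ i, (starRingEnd 𝕜) (Φ i j) * Φ i j' := by
  simp [mul_apply]

theorem conjTranspose_mul_self_apply_self {m n 𝕜 : Type*} [Fintype m] [RCLike 𝕜]
    (Φ : Matrix m n 𝕜) (j : n) :
    (Φᴴ * Φ) j j = ((∑ i, ‖Φ i j‖ ^ 2 : ℝ) : 𝕜) := by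
  simp [conjTranspose_mul_self_apply, RCLike.conj_mul]

theorem sparse_representation_unique_general (N M : ℕ) (Φ : Matrix (Fin N) (Fin M) ℂ)
    (hcol : ∀ j : Fin M, ∑ i, ‖Φ i j‖ ^ 2 = 1)
    (μ : ℝ)
    (hμ : ∀ j j' : Fin M, j ≠ j' →
      ‖∑ i, (starRingEnd ℂ) (Φ i j) * Φ i j'‖ ≤ μ)
    (K : ℕ) (hK : (K : ℝ) < (1 / μ + 1) / 2)
    (s s' : Fin M → ℂ)
    (hs : (Finset.univ.filter fun j => s j ≠ 0).card ≤ K)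
    (hs' : (Finset.univ.filter fun j => s' j ≠ 0).card ≤ K)
    (h : Φ.mulVec s = Φ.mulVec s') : s = s' := by
  by_contra hne
  obtain ⟨j, hj⟩ := Function.ne_iff.mp hne
  have hc : (1 : ℝ) ≤ #{j | (s - s') j ≠ 0} := Nat.one_le_cast.mpr <| card_pos.mpr
    (filter_nonempty_iff.mpr ⟨j, mem_univ j, sub_ne_zero.mpr hj⟩)
  have hsupp := one_le_card_filter_ne_zero_sub_one_mul (A := Φᴴ * Φ)
    (fun j => by rw [conjTranspose_mul_self_apply_self, hcol, RCLike.ofReal_one])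
    (fun j j' hj => by rw [conjTranspose_mul_self_apply]; exact hμ j j' hj)
    (sub_ne_zero.mpr hne) (by rw [← mulVec_mulVec, mulVec_sub, h, sub_self, mulVec_zero])
  have hcard : (#{j | (s - s') j ≠ 0} : ℝ) ≤ 2 * K := by
    exact_mod_cast (card_filter_sub_ne_zero_le s s').trans (by omega)
  have hμpos : 0 < μ := pos_of_mul_pos_right (one_pos.trans_le hsupp) (by linarith)
  have hKμ : (2 * K - 1 : ℝ) * μ < 1 := by
    rw [← lt_div_iff₀ hμpos]
    linarith
  linarith [mul_le_mul_of_nonneg_right (sub_le_sub_right hcard 1) hμpos.le]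

/-- Uniqueness of sparse representation for incoherent dictionaries: if `Φ` has unit-norm
columns and coherence at most `μ`, and `s, s'` are `K`-sparse with `K < (1/μ + 1)/2`
and `Φs = Φs'`, then `s = s'`. -/
theorem sparse_representation_unique (N M : ℕ) (Φ : Matrix (Fin N) (Fin M) ℂ)
    (hcol : ∀ j : Fin M, ∑ i, ‖Φ i j‖ ^ 2 = 1)
    (μ : ℝ) (hμpos : 0 < μ)
    (hμ : ∀ j j' : Fin M, j ≠ j' →
      ‖∑ i, (starRingEnd ℂ) (Φ i j) * Φ i j'‖ ≤ μ)
    (K : ℕ) (hK : (K : ℝ) < (1 / μ + 1) / 2)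
    (s s' : Fin M → ℂ)
    (hs : (Finset.univ.filter fun j => s j ≠ 0).card ≤ K)
    (hs' : (Finset.univ.filter fun j => s' j ≠ 0).card ≤ K)
    (h : Φ.mulVec s = Φ.mulVec s') : s = s' :=
  sparse_representation_unique_general N M Φ hcol μ hμ K hK s s' hs hs' h
end
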